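/- arXiv:2309.02733 — 2 statements merged into one kernel-verified Lean document; each statement's English description precedes it below -/
import Mathlib

section
/- Let Φ ∈ ℝ^{n×n}, G ∈ ℝ^{n×q}, Ξ ∈ ℝ^{l×n}, and let A = [[Φ, G],[0, I_q]], C = [Ξ 0]. Then the vertical stack of C, CA, CA², ..., CA^{n-1} equals the block matrix [O Ī·O·G], where O is the vertical stack of Ξ, ΞΦ, ..., ΞΦ^{n-1}, and Ī = L ⊗ I_l with L the n×n strictly lower triangular all-ones matrix (L_{ij} = 1 if i > j, else 0). -/
/-!
The augmented matrix is block upper triangular with identity corner, so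
`A ^ k = [[Φ ^ k, (∑_{t<k} Φ ^ t) G], [0, I]]` and `C A ^ k = [Ξ Φ ^ k, ∑_{t<k} Ξ Φ ^ t G]`.
Multiplying a vertical stack of blocks by `L ⊗ I` replaces the `i`-th block by the sum of the
blocks above it, which produces the second block column.
-/

open Matrix Finset

namespace Matrix

variable {R : Type*}

section Stack

variable {ι κ m p : Type*}

def stackRows (M : ι → Matrix κ m R) : Matrix (ι × κ) m R := of fun x j => M x.1 x.2 j

theorem stackRows_mul [Fintype m] [NonUnitalNonAssocSemiring R]
    (M : ι → Matrix κ m R) (N : Matrix m p R) :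
    stackRows M * N = stackRows fun i => M i * N := rfl

theorem stackRows_fromCols (X : ι → Matrix κ m R) (Y : ι → Matrix κ p R) :
    stackRows (fun i => fromCols (X i) (Y i)) = fromCols (stackRows X) (stackRows Y) := by
  ext x (j | j) <;> rfl

theorem kroneckerMap_one_mul_stackRows [Fintype ι] [Fintype κ] [DecidableEq κ]
    [NonAssocSemiring R] (L : Matrix ι ι R) (M : ι → Matrix κ m R) :
    kroneckerMap (· * ·) L (1 : Matrix κ κ R) * stackRows M =
      stackRows fun i => ∑ t, L i t • M t := by
  ext ⟨i, k⟩ j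
  simp only [stackRows, mul_apply, of_apply, kroneckerMap_apply, Fintype.sum_prod_type, sum_apply,
    smul_apply, smul_eq_mul, one_apply, mul_ite, mul_one, mul_zero, ite_mul, zero_mul,
    sum_ite_eq, mem_univ, if_true]

end Stack

theorem fromBlocks_zero_one_pow {n q : Type*} [Fintype n] [Fintype q] [DecidableEq n]
    [DecidableEq q] [Semiring R] (Φ : Matrix n n R) (G : Matrix n q R) (k : ℕ) :
    fromBlocks Φ G 0 (1 : Matrix q q R) ^ k =
      fromBlocks (Φ ^ k) ((∑ i ∈ range k, Φ ^ i) * G) 0 1 := by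
  induction k with
  | zero => simp [fromBlocks_one]
  | succ k ih =>
    rw [pow_succ, ih, fromBlocks_multiply, sum_range_succ, Matrix.add_mul]
    simp [add_comm, pow_succ]

end Matrix

theorem Fin.sum_univ_ite_lt_smul {R M : Type*} [Semiring R] [AddCommMonoid M] [Module R M]
    {n : ℕ} (i : Fin n) (f : ℕ → M) :
    ∑ t : Fin n, (if t < i then (1 : R) else 0) • f t = ∑ t ∈ range i, f t := by
  simp only [ite_smul, one_smul, zero_smul, Fin.lt_def]
  rw [Fin.sum_univ_eq_sum_range (fun t => if t < (i : ℕ) then f t else 0), ← sum_filter]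
  congr 1
  ext t
  simp only [mem_filter, mem_range]
  omega

/-- The observability matrix of the augmented system (vertical stack of
`C·A^i`, `i = 0,…,n-1`) equals `[O  Ī·O·G]`, where `O` is the observability
matrix of the original system and `Ī = L ⊗ I_l`. -/
theorem stmt_11 (n l q : ℕ) (Φ : Matrix (Fin n) (Fin n) ℝ)
    (G : Matrix (Fin n) (Fin q) ℝ) (Ξ : Matrix (Fin l) (Fin n) ℝ)
    (A : Matrix (Fin n ⊕ Fin q) (Fin n ⊕ Fin q) ℝ)
    (hA : A = Matrix.fromBlocks Φ G (0 : Matrix (Fin q) (Fin n) ℝ)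
      (1 : Matrix (Fin q) (Fin q) ℝ))
    (C : Matrix (Fin l) (Fin n ⊕ Fin q) ℝ)
    (hC : C = Matrix.fromCols Ξ (0 : Matrix (Fin l) (Fin q) ℝ))
    (O : Matrix (Fin n × Fin l) (Fin n) ℝ)
    (hO : O = Matrix.of fun p j => (Ξ * Φ ^ (p.1 : ℕ)) p.2 j)
    (L : Matrix (Fin n) (Fin n) ℝ)
    (hL : L = Matrix.of fun i j => if j < i then (1 : ℝ) else 0)
    (Ibar : Matrix (Fin n × Fin l) (Fin n × Fin l) ℝ)
    (hI : Ibar = Matrix.kroneckerMap (· * ·) L (1 : Matrix (Fin l) (Fin l) ℝ)) :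
    (Matrix.of fun (p : Fin n × Fin l) j => (C * A ^ (p.1 : ℕ)) p.2 j) =
      Matrix.fromCols O (Ibar * O * G) := by
  replace hO : O = stackRows fun i : Fin n => Ξ * Φ ^ (i : ℕ) := hO
  change stackRows (fun i : Fin n => C * A ^ (i : ℕ)) = _
  rw [hA, hC, hI, hL, hO, kroneckerMap_one_mul_stackRows, stackRows_mul, ← stackRows_fromCols]
  congr 1
  funext i
  rw [fromBlocks_zero_one_pow, fromCols_mul_fromBlocks]
  simp only [of_apply, Fin.sum_univ_ite_lt_smul i fun t => Ξ * Φ ^ t, Matrix.mul_zero,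
    add_zero, Matrix.mul_one, Matrix.mul_sum, Matrix.sum_mul, Matrix.mul_assoc]
end

section
/- Let Z₁ = Z(G₁, c₁, A₁, b₁, h₁) ⊆ ℝⁿ be a constrained zonotope and let M ∈ ℝ^{m×n}, u ∈ ℝᵐ (with m ≤ n handled via M applied to Z₁), and Z₂ = Z(G₂, c₂, A₂, b₂, h₂) ⊆ ℝⁿ. Then the set M·Z₁ + u ⊕ Z₂ (Minkowski sum of the affine image of Z₁ and Z₂) equals the constrained zonotope Z([M·G₁ G₂], M·c₁ + u + c₂, diag(A₁, A₂), (b₁; b₂), (h₁; h₂)). -/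
open scoped Pointwise

open scoped ENNReal

/-- The set described by a constrained zonotope `Z(G, c, A, b, h)`. -/
def czSet {N NG NC : Type*} [Fintype N] [Fintype NG] [Fintype NC]
    (G : Matrix N NG ℝ) (c : N → ℝ) (A : Matrix NC NG ℝ) (b : NC → ℝ)
    (h : NG → ℝ≥0∞) : Set (N → ℝ) :=
  {x | ∃ ξ : NG → ℝ, x = G.mulVec ξ + c ∧ A.mulVec ξ = b ∧
    ∀ j, ENNReal.ofReal |ξ j| ≤ h j}

/-! An affine map acts on a constrained zonotope through its generators and center. In a Minkowski
sum the generator vectors of the two summands are concatenated, ξ = Sum.elim ξ₁ ξ₂; the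
block-diagonal constraint matrix and the concatenated bounds keep the two halves uncoupled. -/

section

open scoped Matrix

variable {N N' NG NC NG₁ NC₁ NG₂ NC₂ : Type*} [Fintype N] [Fintype N'] [Fintype NG] [Fintype NC]
  [Fintype NG₁] [Fintype NC₁] [Fintype NG₂] [Fintype NC₂]

theorem image_mulVec_add_czSet (M : Matrix N' N ℝ) (u : N' → ℝ) (G : Matrix N NG ℝ) (c : N → ℝ)
    (A : Matrix NC NG ℝ) (b : NC → ℝ) (h : NG → ℝ≥0∞) :
    (fun x => M *ᵥ x + u) '' czSet G c A b h = czSet (M * G) (M *ᵥ c + u) A b h := by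
  ext x
  constructor
  · rintro ⟨_, ⟨ξ, rfl, hA, hh⟩, rfl⟩
    exact ⟨ξ, by simp only [Matrix.mulVec_add, Matrix.mulVec_mulVec, add_assoc], hA, hh⟩
  · rintro ⟨ξ, rfl, hA, hh⟩
    refine ⟨G *ᵥ ξ + c, ⟨ξ, rfl, hA, hh⟩, ?_⟩
    simp only [Matrix.mulVec_add, Matrix.mulVec_mulVec, add_assoc]

theorem czSet_add_czSet (G₁ : Matrix N NG₁ ℝ) (c₁ : N → ℝ) (A₁ : Matrix NC₁ NG₁ ℝ)
    (b₁ : NC₁ → ℝ) (h₁ : NG₁ → ℝ≥0∞) (G₂ : Matrix N NG₂ ℝ) (c₂ : N → ℝ)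
    (A₂ : Matrix NC₂ NG₂ ℝ) (b₂ : NC₂ → ℝ) (h₂ : NG₂ → ℝ≥0∞) :
    czSet G₁ c₁ A₁ b₁ h₁ + czSet G₂ c₂ A₂ b₂ h₂ =
      czSet (Matrix.fromCols G₁ G₂) (c₁ + c₂) (Matrix.fromBlocks A₁ 0 0 A₂)
        (Sum.elim b₁ b₂) (Sum.elim h₁ h₂) := by
  ext x
  simp only [Set.mem_add, czSet, Set.mem_ofPred_eq]
  constructor
  · rintro ⟨_, ⟨ξ₁, rfl, hA₁, hh₁⟩, _, ⟨ξ₂, rfl, hA₂, hh₂⟩, rfl⟩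
    refine ⟨Sum.elim ξ₁ ξ₂, ?_, ?_, Sum.forall.2 ⟨hh₁, hh₂⟩⟩
    · rw [Matrix.fromCols_mulVec_sumElim]
      abel
    · simp [Matrix.fromBlocks_mulVec, hA₁, hA₂]
  · rintro ⟨ξ, rfl, hA, hh⟩
    rw [← Sum.elim_comp_inl_inr ξ] at hA hh ⊢
    set ξ₁ := ξ ∘ Sum.inl
    set ξ₂ := ξ ∘ Sum.inr
    simp only [Matrix.fromBlocks_mulVec, Matrix.zero_mulVec, Sum.elim_comp_inl, Sum.elim_comp_inr,
      add_zero, zero_add, Sum.elim_eq_iff] at hA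
    refine ⟨_, ⟨ξ₁, rfl, hA.1, fun j => hh (.inl j)⟩, _, ⟨ξ₂, rfl, hA.2, fun j => hh (.inr j)⟩, ?_⟩
    rw [Matrix.fromCols_mulVec_sumElim]
    abel

end

/-- Prediction step: the Minkowski sum of an affine image `M·Z₁ + u` of a
constrained zonotope and a constrained zonotope `Z₂` is again a constrained
zonotope, with generators `[M·G₁  G₂]`, center `M·c₁ + u + c₂`, block-diagonal
constraints, and concatenated constraint/bound vectors. -/
theorem stmt_18 (n m ng₁ nc₁ ng₂ nc₂ : ℕ)
    (G₁ : Matrix (Fin n) (Fin ng₁) ℝ) (c₁ : Fin n → ℝ)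
    (A₁ : Matrix (Fin nc₁) (Fin ng₁) ℝ) (b₁ : Fin nc₁ → ℝ) (h₁ : Fin ng₁ → ℝ≥0∞)
    (M : Matrix (Fin m) (Fin n) ℝ) (u : Fin m → ℝ)
    (G₂ : Matrix (Fin m) (Fin ng₂) ℝ) (c₂ : Fin m → ℝ)
    (A₂ : Matrix (Fin nc₂) (Fin ng₂) ℝ) (b₂ : Fin nc₂ → ℝ) (h₂ : Fin ng₂ → ℝ≥0∞) :
    (fun x => M.mulVec x + u) '' czSet G₁ c₁ A₁ b₁ h₁ + czSet G₂ c₂ A₂ b₂ h₂ =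
      czSet (Matrix.fromCols (M * G₁) G₂) (M.mulVec c₁ + u + c₂)
        (Matrix.fromBlocks A₁ 0 0 A₂) (Sum.elim b₁ b₂) (Sum.elim h₁ h₂) := by
  rw [image_mulVec_add_czSet, czSet_add_czSet]
end
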